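/- arXiv:2107.13867 — 5 statements merged into one kernel-verified Lean document; each statement's English description precedes it below -/
import Mathlib

section
/- Let -π/2 < γ < π/2 and 0 ≤ α < 1. For every f ∈ S_γ(α) with Taylor expansion f(z) = z + a₂z² + a₃z³ + ⋯, one has -1 ≤ |a₂| - 1 ≤ 2(1-α)cos γ - 1; equivalently, |a₂| ≤ 2(1-α)cos γ. -/
/-!
With `g = z f'/f`, the function `P = e^{-iγ} g - α cos γ` has positive real part on the disk,
`Re P(0) = (1 - α) cos γ` and `P'(0) = e^{-iγ} a₂`. Applying the Schwarz lemma to the Cayley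
transform `(P - P(0)) / (P + conj P(0))`, which maps the disk into itself and vanishes at `0`,
gives Carathéodory's bound `|P'(0)| ≤ 2 Re P(0)`, i.e. `|a₂| ≤ 2 (1 - α) cos γ`.
-/

open Complex Metric Real Filter Topology
open scoped ComplexConjugate

theorem hasDerivAt_dslope_self {𝕜 : Type*} [NontriviallyNormedField 𝕜] [CompleteSpace 𝕜]
    [CharZero 𝕜] {f : 𝕜 → 𝕜} {a : 𝕜} (hf : AnalyticAt 𝕜 f a) :
    HasDerivAt (dslope f a) (iteratedDeriv 2 f a / 2) a := by
  simpa [FormalMultilinearSeries.coeff_ofScalars] using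
    hf.hasFPowerSeriesAt.has_fpower_series_dslope_fslope.hasDerivAt

theorem hasDerivAt_deriv_div_dslope {𝕜 : Type*} [NontriviallyNormedField 𝕜] [CompleteSpace 𝕜]
    [CharZero 𝕜] {f : 𝕜 → 𝕜} {a : 𝕜} (hf : AnalyticAt 𝕜 f a) (ha : deriv f a ≠ 0) :
    HasDerivAt (deriv f / dslope f a) (iteratedDeriv 2 f a / (2 * deriv f a)) a := by
  have hf'' : HasDerivAt (deriv f) (iteratedDeriv 2 f a) a := by
    rw [iteratedDeriv_succ, iteratedDeriv_one]
    exact hf.deriv.differentiableAt.hasDerivAt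
  have hquot := hf''.div (hasDerivAt_dslope_self hf) (by rwa [dslope_same])
  rw [dslope_same] at hquot
  refine hquot.congr_deriv ?_
  field_simp
  ring

theorem Complex.norm_sub_div_add_conj_lt_one {w q : ℂ} (hw : 0 < w.re) (hq : 0 < q.re) :
    ‖(w - q) / (w + conj q)‖ < 1 := by
  have hden : w + conj q ≠ 0 := fun h ↦ by
    have := congrArg re h
    simp only [add_re, conj_re, zero_re] at this
    linarith
  rw [norm_div, div_lt_one (norm_pos_iff.mpr hden), ← sq_lt_sq₀ (norm_nonneg _) (norm_nonneg _),
    Complex.sq_norm, Complex.sq_norm]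
  have : normSq (w + conj q) - normSq (w - q) = 4 * w.re * q.re := by
    simp only [normSq_apply, add_re, add_im, sub_re, sub_im, conj_re, conj_im]
    ring
  nlinarith [mul_pos hw hq]

theorem Complex.norm_deriv_le_of_re_pos {P : ℂ → ℂ} {c : ℂ} {R : ℝ}
    (hd : DifferentiableOn ℂ P (ball c R)) (hre : ∀ z ∈ ball c R, 0 < (P z).re) (hR : 0 < R) :
    ‖deriv P c‖ ≤ 2 * (P c).re / R := by
  set q := P c
  have hq : 0 < q.re := hre c (mem_ball_self hR)
  have hden : ∀ z ∈ ball c R, P z + conj q ≠ 0 := fun z hz h ↦ by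
    have := congrArg re h
    simp only [add_re, conj_re, zero_re] at this
    linarith [hre z hz]
  set φ := fun z ↦ (P z - q) / (P z + conj q)
  have hφd : DifferentiableOn ℂ φ (ball c R) :=
    (hd.sub_const q).div (hd.add_const _) hden
  have hφ_maps : Set.MapsTo φ (ball c R) (closedBall (φ c) 1) := fun z hz ↦ by
    simpa [φ, q] using (norm_sub_div_add_conj_lt_one (hre z hz) hq).le
  have hP' : HasDerivAt P (deriv P c) c :=
    (hd.differentiableAt (isOpen_ball.mem_nhds (mem_ball_self hR))).hasDerivAt
  have hφ' : deriv φ c = deriv P c / (2 * q.re) := by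
    refine ((hP'.sub_const q).div (hP'.add_const _) (hden c (mem_ball_self hR))).deriv.trans ?_
    rw [show P c = q from rfl, add_conj]
    have : (q.re : ℂ) ≠ 0 := by exact_mod_cast hq.ne'
    field_simp
    push_cast
    ring
  have := norm_deriv_le_div_of_mapsTo_ball hφd hφ_maps hR
  rw [hφ', norm_div, div_le_div_iff₀ (by simp [abs_of_pos hq]; positivity) hR] at this
  simpa [abs_of_pos hq, le_div_iff₀ hR] using this

theorem deriv_div_dslope_of_ne {f : ℂ → ℂ} {c z : ℂ} (hfc : f c = 0) (hz : z ≠ c) :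
    (deriv f / dslope f c) z = (z - c) * deriv f z / f z := by
  rw [Pi.div_apply, dslope_of_ne f hz, slope_def_field, hfc, sub_zero, div_div_eq_mul_div,
    mul_comm]

theorem differentiableOn_deriv_div_dslope {f : ℂ → ℂ} {c : ℂ} {R : ℝ}
    (hf : AnalyticOnNhd ℂ f (ball c R)) (hfc : f c = 0) (hf' : deriv f c ≠ 0)
    (hfz : ∀ z ∈ ball c R, z ≠ c → f z ≠ 0) :
    DifferentiableOn ℂ (deriv f / dslope f c) (ball c R) := by
  intro z hz
  have hc : ball c R ∈ 𝓝 c := isOpen_ball.mem_nhds (mem_ball_self (pos_of_mem_ball hz))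
  have hdslope_ne : dslope f c z ≠ 0 := by
    rcases eq_or_ne z c with rfl | hzc
    · rwa [dslope_same]
    · rw [dslope_of_ne f hzc, slope_def_field, hfc, sub_zero]
      exact div_ne_zero (hfz z hz hzc) (sub_ne_zero.mpr hzc)
  exact (hf.deriv.differentiableOn z hz).div
    ((differentiableOn_dslope hc).2 hf.differentiableOn z hz) hdslope_ne

theorem stmt_0_general (γ α : ℝ) (hγ₁ : -(π / 2) < γ) (hγ₂ : γ < π / 2)
    (hα₂ : α < 1)
    (f : ℂ → ℂ) (hf : AnalyticOnNhd ℂ f (ball 0 1))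
    (hf0 : f 0 = 0) (hf1 : deriv f 0 = 1)
    (hfz : ∀ z ∈ ball (0 : ℂ) 1, z ≠ 0 → f z ≠ 0)
    (hre : ∀ z ∈ ball (0 : ℂ) 1, z ≠ 0 →
      α * Real.cos γ < (Complex.exp (-(↑γ * Complex.I)) * (z * deriv f z / f z)).re) :
    -1 ≤ ‖iteratedDeriv 2 f 0 / 2‖ - 1 ∧
      ‖iteratedDeriv 2 f 0 / 2‖ - 1 ≤ 2 * (1 - α) * Real.cos γ - 1 := by
  have h0 : (0 : ℂ) ∈ ball (0 : ℂ) 1 := mem_ball_self one_pos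
  have hcos : 0 < Real.cos γ := cos_pos_of_mem_Ioo ⟨hγ₁, hγ₂⟩
  have hE_re : (Complex.exp (-(↑γ * Complex.I))).re = Real.cos γ := by
    simp [exp_re]
  -- `deriv f / dslope f 0` is the analytic extension of `z f'(z) / f(z)` across `0`.
  set E := Complex.exp (-(↑γ * Complex.I))
  set P : ℂ → ℂ := fun z ↦ E * (deriv f / dslope f 0) z - ↑(α * Real.cos γ)
  have hP_diff : DifferentiableOn ℂ P (ball 0 1) :=
    ((differentiableOn_deriv_div_dslope hf hf0 (by simp [hf1]) hfz).const_mul E).sub_const _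
  have hP0 : (P 0).re = (1 - α) * Real.cos γ := by
    simp only [P, Pi.div_apply, dslope_same, hf1, div_one, mul_one, sub_re, hE_re, ofReal_re]
    ring
  have hP_re : ∀ z ∈ ball (0 : ℂ) 1, 0 < (P z).re := fun z hz ↦ by
    rcases eq_or_ne z 0 with rfl | hz0
    · rw [hP0]; nlinarith
    · have hz := hre z hz hz0
      simp only [P, deriv_div_dslope_of_ne hf0 hz0, sub_zero, sub_re, ofReal_re]
      linarith
  have hP_deriv : ‖deriv P 0‖ = ‖iteratedDeriv 2 f 0 / 2‖ := by
    have := ((hasDerivAt_deriv_div_dslope (hf 0 h0) (by simp [hf1])).const_mul E).sub_const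
      (↑(α * Real.cos γ) : ℂ)
    rw [this.deriv, norm_mul, hf1, mul_one, norm_exp]
    simp
  have hbound := norm_deriv_le_of_re_pos hP_diff hP_re one_pos
  rw [hP_deriv, hP0] at hbound
  constructor <;> linarith [norm_nonneg (iteratedDeriv 2 f 0 / 2)]

/-- For `-π/2 < γ < π/2`, `0 ≤ α < 1` and `f ∈ S_γ(α)` with
Taylor expansion `f(z) = z + a₂ z² + ⋯`, one has
`-1 ≤ |a₂| - 1 ≤ 2(1-α) cos γ - 1`. Here `a₂ = f''(0)/2 = iteratedDeriv 2 f 0 / 2`. -/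
theorem stmt_0 (γ α : ℝ) (hγ₁ : -(π / 2) < γ) (hγ₂ : γ < π / 2)
    (hα₁ : 0 ≤ α) (hα₂ : α < 1)
    (f : ℂ → ℂ) (hf : AnalyticOnNhd ℂ f (ball 0 1))
    (hf0 : f 0 = 0) (hf1 : deriv f 0 = 1)
    (hfz : ∀ z ∈ ball (0 : ℂ) 1, z ≠ 0 → f z ≠ 0)
    (hre : ∀ z ∈ ball (0 : ℂ) 1, z ≠ 0 →
      α * Real.cos γ < (Complex.exp (-(↑γ * Complex.I)) * (z * deriv f z / f z)).re) :
    -1 ≤ ‖iteratedDeriv 2 f 0 / 2‖ - 1 ∧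
      ‖iteratedDeriv 2 f 0 / 2‖ - 1 ≤ 2 * (1 - α) * Real.cos γ - 1 :=
  stmt_0_general γ α hγ₁ hγ₂ hα₂ f hf hf0 hf1 hfz hre
end

section
/- Let -π/2 < γ < π/2 and set T(0,γ) = √(1 + 8cos²γ). For every γ-spirallike function f ∈ S_γ(0) with Taylor expansion f(z) = z + a₂z² + a₃z³ + ⋯, one has -2cos γ / √(1 + T(0,γ)) ≤ |a₃| - |a₂| ≤ cos γ. -/
/-!
Write `q = f / z`, so that `z f' / f = 1 + z q' / q =: P`, and `c = e^{-iγ}`; the hypothesis says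
`Re (c P) > 0`. The Cayley transform `(c P - c) / (c P + c̄)` maps the disk into itself and vanishes
at `0`, so it equals `z φ` with `‖φ‖ ≤ 1` (Schwarz) and `‖φ'(0)‖ ≤ 1 - ‖φ(0)‖²` (Schwarz–Pick).
Unwinding, `q' = φ (K q + z q')` with `K = 1 + c̄ / c = 1 + e^{2iγ}`, whence `a₂ = K φ(0)` and
`a₃ = K / 2 · (φ'(0) + (K + 1) φ(0)²)`, where `‖K‖ = 2 cos γ` and `‖K + 1‖ = T`. Both bounds then
follow from an elementary inequality in `t = ‖φ(0)‖` and `‖φ'(0)‖ ≤ 1 - t²`.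
-/

open Complex Metric Filter Set
open scoped Real ComplexConjugate Topology

lemma sub_two_mul_le_one_of_le {t T A : ℝ} (ht₀ : 0 ≤ t) (ht₁ : t ≤ 1) (hT : T ≤ 3)
    (hA : A ≤ 1 - t ^ 2 + T * t ^ 2) : A - 2 * t ≤ 1 := by
  nlinarith [mul_nonneg ht₀ (sub_nonneg.2 ht₁), mul_nonneg (sub_nonneg.2 hT) (sq_nonneg t)]

lemma neg_two_div_sqrt_le_sub_two_mul {t T A : ℝ} (hT : 0 ≤ T) (hA₀ : 0 ≤ A)
    (hA : (1 + T) * t ^ 2 - 1 ≤ A) : -2 / √(1 + T) ≤ A - 2 * t := by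
  set v := √(1 + T)
  have hv : v ^ 2 = 1 + T := Real.sq_sqrt (by linarith)
  have hv₁ : 1 ≤ v := Real.one_le_sqrt.2 (by linarith)
  rw [neg_div, neg_le, le_div_iff₀ (by linarith)]
  rcases le_or_gt (t * v) 1 with h | h
  · nlinarith [mul_nonneg hA₀ (by linarith : (0 : ℝ) ≤ v)]
  · -- for `t ≥ 1 / v` the lower bound `v² t² - 1 - 2 t` of `A - 2 t` is increasing in `t`
    nlinarith [mul_nonneg (sub_nonneg.2 h.le) (by nlinarith : 0 ≤ v * (t * v) + v - 2),
      mul_le_mul_of_nonneg_left hA (by linarith : (0 : ℝ) ≤ v)]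

lemma normSq_one_sub_conj_mul_sub_normSq_sub (a b : ℂ) :
    normSq (1 - conj a * b) - normSq (b - a) = (1 - normSq a) * (1 - normSq b) := by
  simp only [normSq_apply, sub_re, sub_im, mul_re, mul_im, one_re, one_im, conj_re, conj_im]
  ring

lemma norm_sub_div_one_sub_conj_mul_lt_one {a b : ℂ} (ha : ‖a‖ < 1) (hb : ‖b‖ < 1) :
    ‖(b - a) / (1 - conj a * b)‖ < 1 := by
  have key := normSq_one_sub_conj_mul_sub_normSq_sub a b
  have ha' : normSq a < 1 := by rw [← Complex.sq_norm]; nlinarith [norm_nonneg a]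
  have hb' : normSq b < 1 := by rw [← Complex.sq_norm]; nlinarith [norm_nonneg b]
  have h : ‖b - a‖ < ‖1 - conj a * b‖ := by
    rw [← sq_lt_sq₀ (norm_nonneg _) (norm_nonneg _), Complex.sq_norm, Complex.sq_norm]
    nlinarith [mul_pos (sub_pos.2 ha') (sub_pos.2 hb')]
  rw [norm_div]
  exact (div_lt_one ((norm_nonneg _).trans_lt h)).2 h

lemma one_sub_conj_mul_ne_zero {a b : ℂ} (ha : ‖a‖ < 1) (hb : ‖b‖ ≤ 1) : 1 - conj a * b ≠ 0 := by
  rw [sub_ne_zero]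
  intro h
  have : ‖conj a * b‖ < 1 := by
    rw [norm_mul, norm_conj]
    nlinarith [norm_nonneg a, norm_nonneg b]
  simp [← h] at this

lemma norm_sub_lt_norm_add_conj {w c : ℂ} (hc : 0 < c.re) (hw : 0 < w.re) :
    ‖w - c‖ < ‖w + conj c‖ := by
  rw [← sq_lt_sq₀ (norm_nonneg _) (norm_nonneg _), Complex.sq_norm, Complex.sq_norm]
  simp only [normSq_apply, sub_re, sub_im, add_re, add_im, conj_re, conj_im]
  nlinarith [mul_pos hc hw]

lemma norm_deriv_le_one_sub_sq_of_mapsTo_ball {φ : ℂ → ℂ} (hφ : DifferentiableOn ℂ φ (ball 0 1))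
    (h : MapsTo φ (ball 0 1) (ball 0 1)) : ‖deriv φ 0‖ ≤ 1 - ‖φ 0‖ ^ 2 := by
  have h₀ : (0 : ℂ) ∈ ball (0 : ℂ) 1 := mem_ball_self one_pos
  set a := φ 0
  have ha : ‖a‖ < 1 := by simpa using h h₀
  have hden (z : ℂ) (hz : z ∈ ball (0 : ℂ) 1) : 1 - conj a * φ z ≠ 0 :=
    one_sub_conj_mul_ne_zero ha (mem_ball_zero_iff.1 (h hz)).le
  -- compose with the disk automorphism sending `a` to `0` and apply the Schwarz lemma
  set g := (fun z ↦ φ z - a) / fun z ↦ 1 - conj a * φ z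
  have hg : DifferentiableOn ℂ g (ball 0 1) :=
    (hφ.sub_const a).div ((hφ.const_mul _).const_sub 1) hden
  have hg_maps : MapsTo g (ball 0 1) (closedBall (g 0) 1) := fun z hz ↦ by
    simpa [g, a] using (norm_sub_div_one_sub_conj_mul_lt_one ha (by simpa using h hz)).le
  have hconj : 1 - conj a * a = ((1 - ‖a‖ ^ 2 : ℝ) : ℂ) := by push_cast [conj_mul']; ring
  have hpos : 0 < 1 - ‖a‖ ^ 2 := by nlinarith [norm_nonneg a]
  have hg' : HasDerivAt g (deriv φ 0 / (1 - conj a * a)) 0 := by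
    have hφ' := (hφ.differentiableAt (isOpen_ball.mem_nhds h₀)).hasDerivAt
    refine ((hφ'.sub_const a).div ((hφ'.const_mul (conj a)).const_sub 1) (hden 0 h₀)).congr_deriv ?_
    rw [sub_self, zero_mul, sub_zero, sq, mul_div_mul_right _ _ (hden 0 h₀)]
  have := Complex.norm_deriv_le_one_of_mapsTo_ball hg hg_maps one_pos
  rwa [hg'.deriv, norm_div, hconj, norm_real, Real.norm_of_nonneg hpos.le, div_le_one hpos] at this

lemma norm_deriv_le_one_sub_sq {φ : ℂ → ℂ} (hφ : DifferentiableOn ℂ φ (ball 0 1))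
    (h : MapsTo φ (ball 0 1) (closedBall 0 1)) : ‖deriv φ 0‖ ≤ 1 - ‖φ 0‖ ^ 2 := by
  by_cases hopen : MapsTo φ (ball 0 1) (ball 0 1)
  · exact norm_deriv_le_one_sub_sq_of_mapsTo_ball hφ hopen
  -- otherwise `‖φ‖` attains its maximum `1` inside the disk, so `φ` is constant
  obtain ⟨z₀, hz₀, hz₀_norm⟩ : ∃ z₀ ∈ ball (0 : ℂ) 1, ‖φ z₀‖ = 1 := by
    simp only [MapsTo, not_forall, exists_prop] at hopen
    obtain ⟨z₀, hz₀, hz₀'⟩ := hopen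
    exact ⟨z₀, hz₀, le_antisymm (by simpa using h hz₀) (by simpa using hz₀')⟩
  have hmax : IsMaxOn (norm ∘ φ) (ball 0 1) z₀ := fun z hz ↦ by
    simpa [hz₀_norm] using h hz
  have hconst := Complex.eqOn_of_isPreconnected_of_isMaxOn_norm
    (convex_ball (0 : ℂ) 1).isPreconnected isOpen_ball hφ hz₀ hmax
  have h₀ : (0 : ℂ) ∈ ball (0 : ℂ) 1 := mem_ball_self one_pos
  have hderiv : deriv φ 0 = 0 := by
    rw [(eventuallyEq_of_mem (isOpen_ball.mem_nhds h₀) hconst).deriv_eq]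
    exact deriv_const 0 _
  simp [hderiv, hconst h₀, hz₀_norm]

lemma mapsTo_closedBall_of_norm_mul_lt_one {φ : ℂ → ℂ} (hφ : DifferentiableOn ℂ φ (ball 0 1))
    (h : ∀ z ∈ ball (0 : ℂ) 1, ‖z * φ z‖ < 1) : MapsTo φ (ball 0 1) (closedBall 0 1) := by
  intro z hz
  have hmaps : MapsTo (fun w ↦ w * φ w) (ball 0 1) (closedBall (0 * φ 0) 1) := fun w hw ↦ by
    simpa using (h w hw).le
  have hdslope : dslope (fun w ↦ w * φ w) 0 z = φ z := by
    rcases eq_or_ne z 0 with rfl | hz₀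
    · rw [dslope_same]
      simpa using ((hasDerivAt_id' 0).fun_mul
        (hφ.differentiableAt (isOpen_ball.mem_nhds hz)).hasDerivAt).deriv
    · simpa using dslope_sub_smul_of_ne φ hz₀
  simpa [hdslope] using Complex.norm_dslope_le_div_of_mapsTo_ball
    (differentiable_id.differentiableOn.fun_mul hφ) hmaps hz

lemma iteratedDeriv_succ_mul_id_zero {𝕜 : Type*} [NontriviallyNormedField 𝕜] {q : 𝕜 → 𝕜} {n : ℕ}
    (hq : ContDiffAt 𝕜 (n + 1 : ℕ) q 0) :
    iteratedDeriv (n + 1) (fun z ↦ z * q z) 0 = (n + 1) * iteratedDeriv n q 0 := by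
  rw [iteratedDeriv_fun_mul contDiffAt_fun_id hq, Finset.sum_eq_single 1]
  · simp
  · intro i _ hi
    simp [iteratedDeriv_fun_id_zero, hi]
  · simp

lemma deriv_zero_of_deriv_eq_mul {𝕜 : Type*} [NontriviallyNormedField 𝕜] {q φ : 𝕜 → 𝕜} {K : 𝕜}
    (hq₀ : q 0 = 1) (h : deriv q =ᶠ[𝓝 0] fun z ↦ φ z * (K * q z + z * deriv q z)) :
    deriv q 0 = K * φ 0 := by
  rw [h.eq_of_nhds, hq₀]
  ring

lemma deriv_deriv_zero_of_deriv_eq_mul {𝕜 : Type*} [NontriviallyNormedField 𝕜] {q φ : 𝕜 → 𝕜}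
    {K : 𝕜} (hq : DifferentiableAt 𝕜 q 0) (hq' : DifferentiableAt 𝕜 (deriv q) 0)
    (hφ : DifferentiableAt 𝕜 φ 0) (hq₀ : q 0 = 1)
    (h : deriv q =ᶠ[𝓝 0] fun z ↦ φ z * (K * q z + z * deriv q z)) :
    deriv (deriv q) 0 = K * (deriv φ 0 + (K + 1) * φ 0 ^ 2) := by
  have hrhs := hφ.hasDerivAt.fun_mul
    ((hq.hasDerivAt.const_mul K).fun_add ((hasDerivAt_id' 0).fun_mul hq'.hasDerivAt))
  rw [h.deriv_eq, hrhs.deriv, deriv_zero_of_deriv_eq_mul hq₀ h, hq₀]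
  ring

lemma eq_mul_dslope_of_eq_zero {f : ℂ → ℂ} (hf₀ : f 0 = 0) : f = fun z ↦ z * dslope f 0 z :=
  funext fun z ↦ by simpa using (sub_smul_dslope_of_zero hf₀ z).symm

lemma dslope_ne_zero_of_ne_zero {f : ℂ → ℂ} {s : Set ℂ} (hf₀ : f 0 = 0) (hf₁ : deriv f 0 = 1)
    (hfz : ∀ z ∈ s, z ≠ 0 → f z ≠ 0) : ∀ z ∈ s, dslope f 0 z ≠ 0 := by
  intro z hz
  rcases eq_or_ne z 0 with rfl | hz₀
  · simp [hf₁]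
  · intro h
    exact hfz z hz hz₀ (by rw [congrFun (eq_mul_dslope_of_eq_zero hf₀) z, h, mul_zero])

lemma re_mul_one_add_mul_deriv_dslope_div_pos {c : ℂ} (hc : 0 < c.re) {f : ℂ → ℂ}
    (hf : DifferentiableOn ℂ f (ball 0 1)) (hf₀ : f 0 = 0) (hf₁ : deriv f 0 = 1)
    (hfz : ∀ z ∈ ball (0 : ℂ) 1, z ≠ 0 → f z ≠ 0)
    (hre : ∀ z ∈ ball (0 : ℂ) 1, z ≠ 0 → 0 < (c * (z * deriv f z / f z)).re) :
    ∀ z ∈ ball (0 : ℂ) 1, 0 < (c * (1 + z * deriv (dslope f 0) z / dslope f 0 z)).re := by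
  intro z hz
  rcases eq_or_ne z 0 with rfl | hz₀
  · simpa using hc
  have hqz := dslope_ne_zero_of_ne_zero hf₀ hf₁ hfz z hz
  set q := dslope f 0
  have hq : DifferentiableAt ℂ q z :=
    ((Complex.differentiableOn_dslope (ball_mem_nhds 0 one_pos)).2 hf).differentiableAt
      (isOpen_ball.mem_nhds hz)
  have hfq : f = fun w ↦ w * q w := eq_mul_dslope_of_eq_zero hf₀
  have hderiv : deriv f z = q z + z * deriv q z := by
    rw [hfq, ((hasDerivAt_id' z).fun_mul hq.hasDerivAt).deriv, one_mul]
  convert hre z hz hz₀ using 3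
  rw [hderiv, hfq]
  field_simp

lemma exists_deriv_dslope_eq_mul {c : ℂ} (hc : 0 < c.re) {f : ℂ → ℂ}
    (hf : DifferentiableOn ℂ f (ball 0 1)) (hf₀ : f 0 = 0) (hf₁ : deriv f 0 = 1)
    (hfz : ∀ z ∈ ball (0 : ℂ) 1, z ≠ 0 → f z ≠ 0)
    (hre : ∀ z ∈ ball (0 : ℂ) 1, z ≠ 0 → 0 < (c * (z * deriv f z / f z)).re) :
    ∃ φ : ℂ → ℂ, DifferentiableOn ℂ φ (ball 0 1) ∧ MapsTo φ (ball 0 1) (closedBall 0 1) ∧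
      ∀ z ∈ ball (0 : ℂ) 1, deriv (dslope f 0) z =
        φ z * ((1 + conj c / c) * dslope f 0 z + z * deriv (dslope f 0) z) := by
  have hP := re_mul_one_add_mul_deriv_dslope_div_pos hc hf hf₀ hf₁ hfz hre
  have hqz := dslope_ne_zero_of_ne_zero hf₀ hf₁ hfz
  set q := dslope f 0
  set P := fun z ↦ c * (1 + z * deriv q z / q z)
  set D := fun z ↦ (1 + conj c / c) * q z + z * deriv q z
  have hc₀ : c ≠ 0 := by rintro rfl; simp at hc
  have hq : DifferentiableOn ℂ q (ball 0 1) :=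
    (Complex.differentiableOn_dslope (ball_mem_nhds 0 one_pos)).2 hf
  have hq' : DifferentiableOn ℂ (deriv q) (ball 0 1) := hq.deriv isOpen_ball
  have hD : DifferentiableOn ℂ D (ball 0 1) :=
    (hq.const_mul _).add (differentiable_id.differentiableOn.fun_mul hq')
  have hPc (z : ℂ) (hz : z ∈ ball (0 : ℂ) 1) : P z + conj c ≠ 0 := by
    intro h
    have := congrArg re h
    simp only [add_re, conj_re, zero_re] at this
    linarith [hP z hz]
  have hDP (z : ℂ) (hz : z ∈ ball (0 : ℂ) 1) : D z = q z / c * (P z + conj c) := by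
    simp only [D, P]
    field_simp [hqz z hz]
    ring
  have hD₀ (z : ℂ) (hz : z ∈ ball (0 : ℂ) 1) : D z ≠ 0 := by
    rw [hDP z hz]
    exact mul_ne_zero (div_ne_zero (hqz z hz) hc₀) (hPc z hz)
  have hφ : DifferentiableOn ℂ (fun z ↦ deriv q z / D z) (ball 0 1) := hq'.div hD hD₀
  refine ⟨_, hφ, mapsTo_closedBall_of_norm_mul_lt_one hφ fun z hz ↦ ?_,
    fun z hz ↦ (div_mul_cancel₀ _ (hD₀ z hz)).symm⟩
  have hcayley : z * (deriv q z / D z) = (P z - c) / (P z + conj c) := by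
    rw [hDP z hz]
    simp only [P]
    field_simp [hqz z hz, hPc z hz]
    ring
  have hlt := norm_sub_lt_norm_add_conj hc (hP z hz)
  rw [hcayley, norm_div, div_lt_one ((norm_nonneg _).trans_lt hlt)]
  exact hlt

lemma norm_half_mul_sub_norm_mul_eq (K φ₀ X : ℂ) :
    ‖K / 2 * X‖ - ‖K * φ₀‖ = ‖K‖ / 2 * (‖X‖ - 2 * ‖φ₀‖) := by
  rw [norm_mul, norm_mul, norm_div, Complex.norm_two]
  ring

lemma norm_half_mul_sub_norm_mul_le {K M φ₀ φ₁ : ℂ} (hφ₀ : ‖φ₀‖ ≤ 1)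
    (hφ₁ : ‖φ₁‖ ≤ 1 - ‖φ₀‖ ^ 2) (hM : ‖M‖ ≤ 3) :
    ‖K / 2 * (φ₁ + M * φ₀ ^ 2)‖ - ‖K * φ₀‖ ≤ ‖K‖ / 2 := by
  have hA : ‖φ₁ + M * φ₀ ^ 2‖ ≤ 1 - ‖φ₀‖ ^ 2 + ‖M‖ * ‖φ₀‖ ^ 2 := by
    grw [norm_add_le, norm_mul, norm_pow, hφ₁]
  rw [norm_half_mul_sub_norm_mul_eq]
  nlinarith [sub_two_mul_le_one_of_le (norm_nonneg _) hφ₀ hM hA, norm_nonneg K]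

lemma neg_norm_div_sqrt_le_norm_half_mul_sub_norm_mul {K M φ₀ φ₁ : ℂ}
    (hφ₁ : ‖φ₁‖ ≤ 1 - ‖φ₀‖ ^ 2) :
    -‖K‖ / √(1 + ‖M‖) ≤ ‖K / 2 * (φ₁ + M * φ₀ ^ 2)‖ - ‖K * φ₀‖ := by
  have hA : (1 + ‖M‖) * ‖φ₀‖ ^ 2 - 1 ≤ ‖φ₁ + M * φ₀ ^ 2‖ := by
    have := norm_sub_norm_le (M * φ₀ ^ 2) (-φ₁)
    rw [norm_neg, sub_neg_eq_add, add_comm, norm_mul, norm_pow] at this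
    linarith
  have := neg_two_div_sqrt_le_sub_two_mul (norm_nonneg M) (norm_nonneg _) hA
  rw [norm_half_mul_sub_norm_mul_eq]
  calc -‖K‖ / √(1 + ‖M‖) = ‖K‖ / 2 * (-2 / √(1 + ‖M‖)) := by ring
    _ ≤ _ := mul_le_mul_of_nonneg_left this (by positivity)

theorem norm_coeff_three_sub_norm_coeff_two_bounds_of_re_pos {c : ℂ} (hc : 0 < c.re) {f : ℂ → ℂ}
    (hf : DifferentiableOn ℂ f (ball 0 1)) (hf₀ : f 0 = 0) (hf₁ : deriv f 0 = 1)
    (hfz : ∀ z ∈ ball (0 : ℂ) 1, z ≠ 0 → f z ≠ 0)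
    (hre : ∀ z ∈ ball (0 : ℂ) 1, z ≠ 0 → 0 < (c * (z * deriv f z / f z)).re) :
    -‖1 + conj c / c‖ / √(1 + ‖2 + conj c / c‖) ≤
        ‖iteratedDeriv 3 f 0 / 6‖ - ‖iteratedDeriv 2 f 0 / 2‖ ∧
      ‖iteratedDeriv 3 f 0 / 6‖ - ‖iteratedDeriv 2 f 0 / 2‖ ≤ ‖1 + conj c / c‖ / 2 := by
  obtain ⟨φ, hφ, hφ_maps, hφ_eq⟩ := exists_deriv_dslope_eq_mul hc hf hf₀ hf₁ hfz hre
  set q := dslope f 0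
  set K := 1 + conj c / c
  have hfq : f = fun z ↦ z * q z := eq_mul_dslope_of_eq_zero hf₀
  have hq : AnalyticAt ℂ q 0 := ((Complex.differentiableOn_dslope (ball_mem_nhds 0 one_pos)).2
    hf).analyticAt (ball_mem_nhds 0 one_pos)
  have hφ₀ : DifferentiableAt ℂ φ 0 := hφ.differentiableAt (ball_mem_nhds 0 one_pos)
  have hq₀ : q 0 = 1 := (dslope_same f 0).trans hf₁
  have heq : deriv q =ᶠ[𝓝 0] fun z ↦ φ z * (K * q z + z * deriv q z) :=
    eventuallyEq_of_mem (ball_mem_nhds 0 one_pos) hφ_eq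
  have ha₂ : iteratedDeriv 2 f 0 / 2 = K * φ 0 := by
    rw [hfq, iteratedDeriv_succ_mul_id_zero (n := 1) hq.contDiffAt, iteratedDeriv_one,
      deriv_zero_of_deriv_eq_mul hq₀ heq]
    ring
  have ha₃ : iteratedDeriv 3 f 0 / 6 = K / 2 * (deriv φ 0 + (2 + conj c / c) * φ 0 ^ 2) := by
    rw [hfq, iteratedDeriv_succ_mul_id_zero (n := 2) hq.contDiffAt, iteratedDeriv_succ,
      iteratedDeriv_one, deriv_deriv_zero_of_deriv_eq_mul hq.differentiableAt
        (hq.deriv.differentiableAt) hφ₀ hq₀ heq]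
    ring
  have hM : ‖2 + conj c / c‖ ≤ 3 := by
    grw [norm_add_le, norm_div, norm_conj, div_self (norm_ne_zero_iff.2 (by rintro rfl; simp at hc))]
    norm_num
  have hφ₁ := norm_deriv_le_one_sub_sq hφ hφ_maps
  rw [ha₂, ha₃]
  exact ⟨neg_norm_div_sqrt_le_norm_half_mul_sub_norm_mul hφ₁,
    norm_half_mul_sub_norm_mul_le (by simpa using hφ_maps (mem_ball_self one_pos)) hφ₁ hM⟩

lemma conj_exp_neg_mul_I_div_self (γ : ℝ) :
    conj (exp (-(γ * I))) / exp (-(γ * I)) = exp (γ * I) ^ 2 := by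
  have hconj : conj (exp (-(γ * I))) = exp (γ * I) := by rw [← exp_conj]; simp
  rw [hconj, Complex.exp_neg, div_inv_eq_mul, sq]

lemma normSq_add_exp_mul_I_sq (a γ : ℝ) :
    normSq (a + exp (γ * I) ^ 2) = (a + 2 * Real.cos γ ^ 2 - 1) ^ 2 +
      4 * Real.cos γ ^ 2 * (1 - Real.cos γ ^ 2) := by
  simp only [normSq_apply, sq, add_re, add_im, mul_re, mul_im, ofReal_re, ofReal_im,
    exp_ofReal_mul_I_re, exp_ofReal_mul_I_im]
  linear_combination (1 - 2 * a + Real.cos γ ^ 2 + Real.sin γ ^ 2) * Real.sin_sq_add_cos_sq γ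

lemma norm_add_exp_mul_I_sq (a γ : ℝ) :
    ‖a + exp (γ * I) ^ 2‖ = √((a + 2 * Real.cos γ ^ 2 - 1) ^ 2 +
      4 * Real.cos γ ^ 2 * (1 - Real.cos γ ^ 2)) := by
  rw [← normSq_add_exp_mul_I_sq, ← Complex.sq_norm, Real.sqrt_sq (norm_nonneg _)]

lemma norm_one_add_exp_mul_I_sq (γ : ℝ) : ‖1 + exp (γ * I) ^ 2‖ = 2 * |Real.cos γ| := by
  rw [← ofReal_one, norm_add_exp_mul_I_sq, ← Real.sqrt_sq (by positivity : 0 ≤ 2 * |Real.cos γ|)]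
  congr 1
  rw [mul_pow, sq_abs]
  ring

lemma norm_two_add_exp_mul_I_sq (γ : ℝ) : ‖2 + exp (γ * I) ^ 2‖ = √(1 + 8 * Real.cos γ ^ 2) := by
  rw [← ofReal_ofNat, norm_add_exp_mul_I_sq]
  ring_nf

/-- For `-π/2 < γ < π/2`, `T(0,γ) = √(1 + 8cos²γ)` and `f ∈ S_γ(0)`
(γ-spirallike), one has `-2cos γ / √(1 + T(0,γ)) ≤ |a₃| - |a₂| ≤ cos γ`, where
`a₂ = iteratedDeriv 2 f 0 / 2` and `a₃ = iteratedDeriv 3 f 0 / 6`. -/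
theorem stmt_3 (γ : ℝ) (hγ₁ : -(π / 2) < γ) (hγ₂ : γ < π / 2)
    (f : ℂ → ℂ) (hf : AnalyticOnNhd ℂ f (ball 0 1))
    (hf0 : f 0 = 0) (hf1 : deriv f 0 = 1)
    (hfz : ∀ z ∈ ball (0 : ℂ) 1, z ≠ 0 → f z ≠ 0)
    (hre : ∀ z ∈ ball (0 : ℂ) 1, z ≠ 0 →
      0 < (Complex.exp (-(↑γ * Complex.I)) * (z * deriv f z / f z)).re)
    (T : ℝ) (hT : T = Real.sqrt (1 + 8 * Real.cos γ ^ 2)) :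
    -(2 * Real.cos γ) / Real.sqrt (1 + T) ≤
        ‖iteratedDeriv 3 f 0 / 6‖ - ‖iteratedDeriv 2 f 0 / 2‖ ∧
      ‖iteratedDeriv 3 f 0 / 6‖ - ‖iteratedDeriv 2 f 0 / 2‖ ≤
        Real.cos γ := by
  have hcos : 0 < Real.cos γ := Real.cos_pos_of_mem_Ioo ⟨hγ₁, hγ₂⟩
  have hc : 0 < (exp (-(γ * I))).re := by
    rwa [← neg_mul, ← ofReal_neg, exp_ofReal_mul_I_re, Real.cos_neg]
  have h := norm_coeff_three_sub_norm_coeff_two_bounds_of_re_pos hc hf.differentiableOn hf0 hf1 hfz hre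
  rw [conj_exp_neg_mul_I_div_self, norm_one_add_exp_mul_I_sq, norm_two_add_exp_mul_I_sq, ← hT,
    abs_of_pos hcos] at h
  exact ⟨h.1, h.2.trans_eq (by ring)⟩
end

section
/- Let -π/2 < γ < π/2 and 0 ≤ α < 1. For every f ∈ C_γ(α) with Taylor expansion f(z) = z + a₂z² + ⋯, one has -1 ≤ |a₂| - 1 ≤ (1-α)cos γ - 1; equivalently, |a₂| ≤ (1-α)cos γ. -/
open Complex Metric Real ComplexConjugate

/-! The function `p z = e^{-iγ} (1 + z f''(z) / f'(z))` is holomorphic on the disk with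
`Re p > α cos γ`, `p 0 = e^{-iγ}` and `p'(0) = e^{-iγ} f''(0) = 2 e^{-iγ} a₂`. The Möbius map
`w ↦ (w - p 0) / (w + conj (p 0) - 2 α cos γ)` sends the half-plane `Re w > α cos γ` into the unit
disk and `p 0` to `0`, so the Schwarz lemma gives the Carathéodory-type bound
`|p'(0)| ≤ 2 (Re p(0) - α cos γ) = 2 (1 - α) cos γ`. -/

theorem norm_sub_lt_norm_add_conj_sub {β : ℝ} {w c : ℂ} (hw : β < w.re) (hc : β < c.re) :
    ‖w - c‖ < ‖w + conj c - 2 * β‖ := by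
  -- The imaginary parts agree and the squared norms differ by `4 (Re w - β) (Re c - β)`.
  have hsq : ‖w - c‖ ^ 2 < ‖w + conj c - 2 * β‖ ^ 2 := by
    simp only [Complex.sq_norm, Complex.normSq_apply, sub_re, sub_im, add_re, add_im, conj_re,
      conj_im, mul_re, mul_im, ofReal_re, ofReal_im]
    norm_num
    nlinarith [mul_pos (sub_pos.2 hw) (sub_pos.2 hc)]
  exact lt_of_pow_lt_pow_left₀ 2 (norm_nonneg _) hsq

theorem norm_deriv_le_of_forall_lt_re {g : ℂ → ℂ} {c : ℂ} {R β : ℝ} (hR : 0 < R)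
    (hg : DifferentiableOn ℂ g (ball c R)) (hβ : ∀ z ∈ ball c R, β < (g z).re) :
    ‖deriv g c‖ ≤ 2 * ((g c).re - β) / R := by
  have hc : β < (g c).re := hβ c (mem_ball_self hR)
  set D : ℂ → ℂ := fun z => g z + conj (g c) - 2 * β
  set F : ℂ → ℂ := fun z => (g z - g c) / D z
  have hND : ∀ z ∈ ball c R, ‖g z - g c‖ < ‖D z‖ := fun z hz =>
    norm_sub_lt_norm_add_conj_sub (hβ z hz) hc
  have hD : ∀ z ∈ ball c R, D z ≠ 0 := fun z hz =>
    norm_pos_iff.1 ((norm_nonneg _).trans_lt (hND z hz))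
  have hDc : D c = ((2 * ((g c).re - β) : ℝ) : ℂ) := by
    simp only [D, add_conj]
    push_cast
    ring
  have hFd : DifferentiableOn ℂ F (ball c R) :=
    (hg.sub_const _).div (hg.add_const _ |>.sub_const _) hD
  have hFmaps : Set.MapsTo F (ball c R) (closedBall (F c) 1) := fun z hz => by
    have hDz := hND z hz
    simp only [F, sub_self, zero_div, mem_closedBall, dist_zero_right, norm_div]
    exact div_le_one_of_le₀ hDz.le (norm_nonneg _)
  have hschwarz : ‖deriv F c‖ ≤ 1 / R := norm_deriv_le_div_of_mapsTo_ball hFd hFmaps hR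
  have hgc : HasDerivAt g (deriv g c) c :=
    (hg.differentiableAt (ball_mem_nhds c hR)).hasDerivAt
  have hFc : deriv F c = deriv g c / D c := by
    have hDc0 : g c + conj (g c) - 2 * β ≠ 0 := hD c (mem_ball_self hR)
    refine ((hgc.sub_const (g c)).div ((hgc.add_const _).sub_const _) hDc0).deriv.trans ?_
    simp only [D, sub_self, zero_mul, sub_zero]
    field_simp
  have hpos : 0 < 2 * ((g c).re - β) := by linarith
  rw [hFc, hDc, norm_div, norm_real, Real.norm_of_nonneg hpos.le, div_le_div_iff₀ hpos hR] at hschwarz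
  rw [le_div_iff₀ hR]
  linarith

theorem hasDerivAt_id_mul_zero {𝕜 : Type*} [NontriviallyNormedField 𝕜] {q : 𝕜 → 𝕜}
    (hq : DifferentiableAt 𝕜 q 0) : HasDerivAt (fun z => z * q z) (q 0) 0 := by
  have h := (hasDerivAt_id (0 : 𝕜)).mul hq.hasDerivAt
  simp only [id, one_mul, zero_mul, add_zero] at h
  exact h

theorem stmt_4_general (γ α : ℝ)
    (f : ℂ → ℂ) (hf : AnalyticOnNhd ℂ f (ball 0 1))
    (hf1 : deriv f 0 = 1)
    (hf' : ∀ z ∈ ball (0 : ℂ) 1, deriv f z ≠ 0)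
    (hre : ∀ z ∈ ball (0 : ℂ) 1,
      α * Real.cos γ <
        (Complex.exp (-(↑γ * Complex.I)) * (1 + z * deriv (deriv f) z / deriv f z)).re) :
    -1 ≤ ‖iteratedDeriv 2 f 0 / 2‖ - 1 ∧
      ‖iteratedDeriv 2 f 0 / 2‖ - 1 ≤ (1 - α) * Real.cos γ - 1 := by
  set e := Complex.exp (-(↑γ * Complex.I))
  set q : ℂ → ℂ := fun z => deriv (deriv f) z / deriv f z
  set p : ℂ → ℂ := fun z => e * (1 + z * q z)
  have hq : DifferentiableOn ℂ q (ball 0 1) :=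
    hf.deriv.deriv.differentiableOn.div hf.deriv.differentiableOn hf'
  have hp : DifferentiableOn ℂ p (ball 0 1) :=
    ((differentiableOn_id.mul hq).const_add 1).const_mul e
  have hp' : deriv p 0 = e * deriv (deriv f) 0 := by
    have hq0 := hq.differentiableAt (ball_mem_nhds 0 one_pos)
    rw [(((hasDerivAt_id_mul_zero hq0).const_add 1).const_mul e).deriv]
    simp [q, hf1]
  have hbound := norm_deriv_le_of_forall_lt_re one_pos hp fun z hz => by
    simpa only [p, q, mul_div_assoc] using hre z hz
  have he : ‖e‖ = 1 := by simp [e, Complex.norm_exp]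
  have hp0 : (p 0).re = Real.cos γ := by simp [p, e, Complex.exp_re]
  rw [hp', norm_mul, he, one_mul, hp0] at hbound
  rw [iteratedDeriv_succ, iteratedDeriv_one, norm_div, Complex.norm_ofNat]
  constructor <;> linarith [norm_nonneg (deriv (deriv f) 0)]

/-- For `-π/2 < γ < π/2`, `0 ≤ α < 1` and `f ∈ C_γ(α)` (γ-convex of
order α) with Taylor expansion `f(z) = z + a₂ z² + ⋯`, one has
`-1 ≤ |a₂| - 1 ≤ (1-α) cos γ - 1`, where `a₂ = iteratedDeriv 2 f 0 / 2`. -/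
theorem stmt_4 (γ α : ℝ) (hγ₁ : -(π / 2) < γ) (hγ₂ : γ < π / 2)
    (hα₁ : 0 ≤ α) (hα₂ : α < 1)
    (f : ℂ → ℂ) (hf : AnalyticOnNhd ℂ f (ball 0 1))
    (hf0 : f 0 = 0) (hf1 : deriv f 0 = 1)
    (hf' : ∀ z ∈ ball (0 : ℂ) 1, deriv f z ≠ 0)
    (hre : ∀ z ∈ ball (0 : ℂ) 1,
      α * Real.cos γ <
        (Complex.exp (-(↑γ * Complex.I)) * (1 + z * deriv (deriv f) z / deriv f z)).re) :
    -1 ≤ ‖iteratedDeriv 2 f 0 / 2‖ - 1 ∧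
      ‖iteratedDeriv 2 f 0 / 2‖ - 1 ≤ (1 - α) * Real.cos γ - 1 :=
  stmt_4_general γ α f hf hf1 hf' hre
end

section
/- Let 0 < λ ≤ 1. For every f ∈ G(λ) with Taylor expansion f(z) = z + a₂z² + a₃z³ + ⋯, one has |a₃| - |a₂| ≤ λ/6. -/
/-!
The function `g z = z f''(z) / f'(z)` vanishes at `0` and has `Re g < λ/2` on the disk, so by
Carathéodory's coefficient bound its Taylor coefficients of positive order have norm at most `λ`.
These coefficients are `f''(0) = 2 a₂` and `f'''(0) - f''(0)² = 6 a₃ - 4 a₂²`, hence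
`|a₂| ≤ λ/2 ≤ 1/2` and `6 |a₃| ≤ λ + 4 |a₂|² ≤ λ + 3 |a₂|`.

For the coefficient bound, let `c_n = g⁽ⁿ⁾(c) / n!` with `n ≥ 1`. On the circle `|z - c| = r` the
average of `conj (z - c)ⁿ g z` is `r²ⁿ c_n` (Cauchy's formula), while the averages of
`conj (z - c)ⁿ conj (g z)` and `conj (z - c)ⁿ` vanish (mean value property for `(z - c)ⁿ g z`).
Hence `r²ⁿ c_n` is, up to sign, the average of `conj (z - c)ⁿ (2A - 2 Re g z)`, whose norm is
at most `rⁿ` times the average of the nonnegative function `2A - 2 Re g`, i.e. `2 rⁿ (A - Re g c)`.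
-/

open Complex Metric Real
open ComplexConjugate

theorem Real.norm_circleAverage_le {E : Type*} [NormedAddCommGroup E] [NormedSpace ℝ E]
    (f : ℂ → E) (c : ℂ) (R : ℝ) :
    ‖circleAverage f c R‖ ≤ circleAverage (fun z ↦ ‖f z‖) c R := by
  rw [circleAverage_def, circleAverage_def, norm_smul, smul_eq_mul,
    Real.norm_of_nonneg (by positivity)]
  gcongr
  exact intervalIntegral.norm_integral_le_integral_norm two_pi_pos.le

namespace DiffContOnCl

variable {g : ℂ → ℂ} {c : ℂ} {r : ℝ}

theorem circleAverage_conj_sub_pow_mul (hr : 0 < r) (hg : DiffContOnCl ℂ g (ball c r)) (n : ℕ) :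
    Real.circleAverage (fun z ↦ conj (z - c) ^ n * g z) c r =
      r ^ (2 * n) * iteratedDeriv n g c / n.factorial := by
  have hsphere : Set.EqOn (fun z ↦ (z - c)⁻¹ • (conj (z - c) ^ n * g z))
      (fun z ↦ ((r : ℂ) ^ (2 * n)) • ((1 / (z - c) ^ (n + 1)) • g z)) (sphere c r) := by
    intro z hz
    have hnorm : ‖z - c‖ = r := mem_sphere_iff_norm.mp hz
    have hzc : z - c ≠ 0 := by rw [← norm_ne_zero_iff, hnorm]; exact hr.ne'
    have hconj : conj (z - c) = r ^ 2 / (z - c) := by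
      rw [eq_div_iff hzc, mul_comm, mul_conj', hnorm]
    simp only [smul_eq_mul, hconj]
    generalize z - c = w at hzc ⊢
    rw [div_pow, ← pow_mul, mul_comm 2 n]
    field_simp
    ring
  rw [circleAverage_eq_circleIntegral hr.ne', circleIntegral.integral_congr hr.le hsphere,
    circleIntegral.integral_smul, hg.circleIntegral_one_div_sub_center_pow_smul hr n]
  simp only [smul_eq_mul]
  field_simp [two_pi_I_ne_zero]

theorem circleAverage_conj_sub_pow_mul_conj (hr : 0 < r) (hg : DiffContOnCl ℂ g (ball c r))
    {n : ℕ} (hn : n ≠ 0) :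
    Real.circleAverage (fun z ↦ conj (z - c) ^ n * conj (g z)) c r = 0 := by
  have hprod : DiffContOnCl ℂ (fun z ↦ (z - c) ^ n • g z) (ball c |r|) := by
    rw [abs_of_pos hr]
    exact ((differentiable_id.sub_const c).pow n).diffContOnCl.smul hg
  have hint : CircleIntegrable (fun z ↦ (z - c) ^ n • g z) c r :=
    ContinuousOn.circleIntegrable' (hprod.continuousOn.mono
      (by rw [closure_ball c (abs_pos.mpr hr.ne').ne']; exact sphere_subset_closedBall))
  have hconj : (fun z ↦ conj (z - c) ^ n * conj (g z)) =
      (conjCLE : ℂ →L[ℝ] ℂ) ∘ fun z ↦ (z - c) ^ n • g z := by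
    ext z; simp
  rw [hconj, ContinuousLinearMap.circleAverage_comp_comm _ hint, hprod.circleAverage]
  simp [hn]

theorem circleAverage_re (hr : 0 < r) (hg : DiffContOnCl ℂ g (ball c r)) :
    Real.circleAverage (fun z ↦ (g z).re) c r = (g c).re := by
  have hint : CircleIntegrable g c r :=
    (hg.continuousOn_ball.mono sphere_subset_closedBall).circleIntegrable hr.le
  rw [show (fun z ↦ (g z).re) = reCLM ∘ g from rfl,
    ContinuousLinearMap.circleAverage_comp_comm _ hint,
    DiffContOnCl.circleAverage (by rwa [abs_of_pos hr]), reCLM_apply]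

theorem circleAverage_conj_sub_pow_mul_sub_re (A : ℝ) (hr : 0 < r)
    (hg : DiffContOnCl ℂ g (ball c r)) {n : ℕ} (hn : n ≠ 0) :
    Real.circleAverage (fun z ↦ conj (z - c) ^ n * ((2 * (A - (g z).re) : ℝ) : ℂ)) c r =
      -(r ^ (2 * n) * iteratedDeriv n g c / n.factorial) := by
  have hcont : ContinuousOn g (sphere c r) := hg.continuousOn_ball.mono sphere_subset_closedBall
  have hdecomp : (fun z ↦ conj (z - c) ^ n * ((2 * (A - (g z).re) : ℝ) : ℂ)) =
      fun z ↦ conj (z - c) ^ n * conj ((2 * A : ℝ) : ℂ) - conj (z - c) ^ n * g z -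
        conj (z - c) ^ n * conj (g z) := by
    ext z
    rw [Complex.conj_ofReal, ← mul_sub, ← mul_sub, sub_sub, Complex.add_conj]
    push_cast
    ring
  rw [hdecomp, circleAverage_fun_sub, circleAverage_fun_sub,
    diffContOnCl_const.circleAverage_conj_sub_pow_mul_conj hr hn,
    hg.circleAverage_conj_sub_pow_mul hr, hg.circleAverage_conj_sub_pow_mul_conj hr hn]
  · ring
  all_goals exact ContinuousOn.circleIntegrable hr.le (by fun_prop)

theorem norm_iteratedDeriv_div_factorial_mul_pow_le_of_re_le {A : ℝ} (hr : 0 < r)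
    (hg : DiffContOnCl ℂ g (ball c r)) (hA : ∀ z ∈ sphere c r, (g z).re ≤ A)
    {n : ℕ} (hn : n ≠ 0) :
    ‖iteratedDeriv n g c‖ / n.factorial * r ^ n ≤ 2 * (A - (g c).re) := by
  set h : ℂ → ℂ := fun z ↦ conj (z - c) ^ n * ((2 * (A - (g z).re) : ℝ) : ℂ)
  set k : ℂ → ℂ := fun z ↦ ((r ^ n * 2 : ℝ) : ℂ) * (A - g z)
  have hk : DiffContOnCl ℂ k (ball c r) := by
    simpa only [Pi.smul_def, smul_eq_mul] using
      (hg.const_sub (A : ℂ)).const_smul ((r ^ n * 2 : ℝ) : ℂ)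
  have hnorm : Set.EqOn (fun z ↦ ‖h z‖) (fun z ↦ (k z).re) (sphere c |r|) := by
    intro z hz
    rw [abs_of_pos hr] at hz
    have hpos : 0 ≤ 2 * (A - (g z).re) := by linarith [hA z hz]
    dsimp only [h, k]
    rw [norm_mul, norm_pow, Complex.norm_conj, mem_sphere_iff_norm.mp hz, Complex.norm_real,
      Real.norm_of_nonneg hpos, Complex.re_ofReal_mul, Complex.sub_re, Complex.ofReal_re]
    ring
  refine le_of_mul_le_mul_left ?_ (pow_pos hr n)
  calc r ^ n * (‖iteratedDeriv n g c‖ / n.factorial * r ^ n) = ‖Real.circleAverage h c r‖ := by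
        rw [circleAverage_conj_sub_pow_mul_sub_re A hr hg hn, norm_neg, norm_div, norm_mul]
        simp only [pow_mul, norm_pow, norm_real, norm_eq_abs, sq_abs, RCLike.norm_natCast]
        ring
    _ ≤ Real.circleAverage (fun z ↦ ‖h z‖) c r := Real.norm_circleAverage_le h c r
    _ = (k c).re := by rw [circleAverage_congr_sphere hnorm, hk.circleAverage_re hr]
    _ = r ^ n * (2 * (A - (g c).re)) := by
        rw [Complex.re_ofReal_mul, Complex.sub_re, Complex.ofReal_re]
        ring

end DiffContOnCl

theorem DifferentiableOn.norm_iteratedDeriv_div_factorial_mul_pow_le_of_re_le {g : ℂ → ℂ}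
    {c : ℂ} {R A : ℝ} (hR : 0 < R) (hg : DifferentiableOn ℂ g (ball c R))
    (hA : ∀ z ∈ ball c R, (g z).re ≤ A) {n : ℕ} (hn : n ≠ 0) :
    ‖iteratedDeriv n g c‖ / n.factorial * R ^ n ≤ 2 * (A - (g c).re) := by
  have hsmall : ∀ r ∈ Set.Ioo 0 R,
      ‖iteratedDeriv n g c‖ / n.factorial * r ^ n ≤ 2 * (A - (g c).re) := fun r hr ↦
    DiffContOnCl.norm_iteratedDeriv_div_factorial_mul_pow_le_of_re_le hr.1
      (hg.diffContOnCl_ball (closedBall_subset_ball hr.2))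
      (fun z hz ↦ hA z (sphere_subset_ball hr.2 hz)) hn
  have hlim : Filter.Tendsto (fun r : ℝ ↦ ‖iteratedDeriv n g c‖ / n.factorial * r ^ n)
      (nhdsWithin R (Set.Iio R)) (nhds (‖iteratedDeriv n g c‖ / n.factorial * R ^ n)) :=
    ((continuous_const.mul (continuous_pow n)).tendsto R).mono_left nhdsWithin_le_nhds
  exact le_of_tendsto hlim (Filter.eventually_of_mem (Ioo_mem_nhdsLT hR) hsmall)

theorem iteratedDeriv_succ_fun_id_mul_zero {𝕜 : Type*} [NontriviallyNormedField 𝕜] {w : 𝕜 → 𝕜}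
    {n : ℕ} (hw : ContDiffAt 𝕜 (n + 1) w 0) :
    iteratedDeriv (n + 1) (fun z ↦ z * w z) 0 = (n + 1) * iteratedDeriv n w 0 := by
  rw [iteratedDeriv_fun_mul (f := fun z ↦ z) contDiffAt_fun_id hw]
  simp [iteratedDeriv_fun_id_zero]

theorem deriv_logDeriv {𝕜 : Type*} [NontriviallyNormedField 𝕜] {f : 𝕜 → 𝕜} {z : 𝕜}
    (hf : DifferentiableAt 𝕜 f z) (hf' : DifferentiableAt 𝕜 (deriv f) z) (hz : f z ≠ 0) :
    deriv (logDeriv f) z = (deriv (deriv f) z * f z - deriv f z ^ 2) / f z ^ 2 := by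
  rw [logDeriv, sq]
  exact (hf'.hasDerivAt.div hf.hasDerivAt hz).deriv

theorem iteratedDeriv_one_fun_id_mul_logDeriv_deriv {f : ℂ → ℂ} (hf : AnalyticAt ℂ f 0)
    (hf1 : deriv f 0 = 1) :
    iteratedDeriv 1 (fun z ↦ z * logDeriv (deriv f) z) 0 = iteratedDeriv 2 f 0 := by
  have hw : AnalyticAt ℂ (logDeriv (deriv f)) 0 :=
    hf.deriv.deriv.div hf.deriv (by rw [hf1]; exact one_ne_zero)
  rw [← zero_add 1, iteratedDeriv_succ_fun_id_mul_zero hw.contDiffAt]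
  simp [logDeriv_apply, hf1, iteratedDeriv_succ]

theorem iteratedDeriv_two_fun_id_mul_logDeriv_deriv {f : ℂ → ℂ} (hf : AnalyticAt ℂ f 0)
    (hf1 : deriv f 0 = 1) :
    iteratedDeriv 2 (fun z ↦ z * logDeriv (deriv f) z) 0 =
      2 * (iteratedDeriv 3 f 0 - iteratedDeriv 2 f 0 ^ 2) := by
  have hf1' : deriv f 0 ≠ 0 := by rw [hf1]; exact one_ne_zero
  have hw : AnalyticAt ℂ (logDeriv (deriv f)) 0 := hf.deriv.deriv.div hf.deriv hf1'
  rw [← one_add_one_eq_two, iteratedDeriv_succ_fun_id_mul_zero hw.contDiffAt,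
    iteratedDeriv_one, deriv_logDeriv hf.deriv.differentiableAt
      hf.deriv.deriv.differentiableAt hf1']
  norm_num [hf1, iteratedDeriv_succ]

theorem stmt_9_general (lam : ℝ) (hlam₂ : lam ≤ 1)
    (f : ℂ → ℂ) (hf : AnalyticOnNhd ℂ f (ball 0 1))
    (hf1 : deriv f 0 = 1)
    (hf' : ∀ z ∈ ball (0 : ℂ) 1, deriv f z ≠ 0)
    (hre : ∀ z ∈ ball (0 : ℂ) 1,
      (1 + z * deriv (deriv f) z / deriv f z).re < 1 + lam / 2) :
    ‖iteratedDeriv 3 f 0 / 6‖ - ‖iteratedDeriv 2 f 0 / 2‖ ≤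
      lam / 6 := by
  have h0 : (0 : ℂ) ∈ ball (0 : ℂ) 1 := mem_ball_self one_pos
  have hw : AnalyticOnNhd ℂ (logDeriv (deriv f)) (ball 0 1) := hf.deriv.deriv.div hf.deriv hf'
  have hA : ∀ z ∈ ball (0 : ℂ) 1, (z * logDeriv (deriv f) z).re ≤ lam / 2 := fun z hz ↦ by
    have := hre z hz
    rw [mul_div_assoc, ← logDeriv_apply, add_re, one_re] at this
    linarith
  have hcoeff (n : ℕ) (hn : n ≠ 0) :
      ‖iteratedDeriv n (fun z ↦ z * logDeriv (deriv f) z) 0‖ / n.factorial ≤ lam := by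
    simpa [mul_div_cancel₀] using
      (analyticOnNhd_id.mul hw).differentiableOn
        |>.norm_iteratedDeriv_div_factorial_mul_pow_le_of_re_le one_pos hA hn
  have ha₂ : ‖iteratedDeriv 2 f 0‖ ≤ lam := by
    simpa [iteratedDeriv_one_fun_id_mul_logDeriv_deriv (hf 0 h0) hf1] using hcoeff 1 one_ne_zero
  have ha₃ : ‖iteratedDeriv 3 f 0 - iteratedDeriv 2 f 0 ^ 2‖ ≤ lam := by
    simpa [iteratedDeriv_two_fun_id_mul_logDeriv_deriv (hf 0 h0) hf1] using hcoeff 2 two_ne_zero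
  have htri := norm_le_norm_add_norm_sub' (iteratedDeriv 3 f 0) (iteratedDeriv 2 f 0 ^ 2)
  rw [norm_pow] at htri
  rw [norm_div, norm_div, Complex.norm_ofNat, Complex.norm_ofNat]
  nlinarith [norm_nonneg (iteratedDeriv 2 f 0)]

/-- For `0 < λ ≤ 1` and `f ∈ G(λ)`, one has `|a₃| - |a₂| ≤ λ/6`,
where `a₂ = iteratedDeriv 2 f 0 / 2` and `a₃ = iteratedDeriv 3 f 0 / 6`. -/
theorem stmt_9 (lam : ℝ) (hlam₁ : 0 < lam) (hlam₂ : lam ≤ 1)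
    (f : ℂ → ℂ) (hf : AnalyticOnNhd ℂ f (ball 0 1))
    (hf0 : f 0 = 0) (hf1 : deriv f 0 = 1)
    (hf' : ∀ z ∈ ball (0 : ℂ) 1, deriv f z ≠ 0)
    (hre : ∀ z ∈ ball (0 : ℂ) 1,
      (1 + z * deriv (deriv f) z / deriv f z).re < 1 + lam / 2) :
    ‖iteratedDeriv 3 f 0 / 6‖ - ‖iteratedDeriv 2 f 0 / 2‖ ≤
      lam / 6 :=
  stmt_9_general lam hlam₂ f hf hf1 hf' hre
end

section
/- Let -π/2 < γ < π/2, 0 ≤ α < 1, and μ = e^{iγ} cos γ. The function k_{γ,α}(z) = z/(1 - z)^{2(1-α)μ} (with the principal branch of the power, equal to z at z = 0) belongs to S_γ(α), and its Taylor coefficients satisfy a₂ = 2(1-α)μ, so |a₂| = 2(1-α)cos γ. -/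
open Complex Metric Real

/-!
On the unit disk `1 - z` lies in the slit plane, so `k(z) = z · exp(-w Log(1 - z))` is analytic,
vanishes only at `0`, and has logarithmic derivative `z k'(z) / k(z) = 1 + w z / (1 - z)`.
For `w = 2(1-α)μ` the rotation cancels the argument of `μ`:
`e^{-iγ} (1 + w t) = e^{-iγ} + 2(1-α) cos γ · t`, whose real part is
`cos γ + 2(1-α) cos γ · Re t`. Since `z ↦ z / (1 - z)` maps the disk into `Re t > -1/2`,
this exceeds `α cos γ`. Writing `k' = g · (1 + w z / (1 - z))` with `g = exp(-w Log(1 - z))`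
and differentiating once more at `0` gives `k''(0) = g'(0) + w = 2w`.
-/

lemma one_sub_mem_slitPlane {z : ℂ} (hz : ‖z‖ < 1) : 1 - z ∈ slitPlane := by
  simpa [sub_eq_add_neg] using mem_slitPlane_of_norm_lt_one (z := -z) (by simpa)

lemma neg_half_lt_re_div_one_sub {z : ℂ} (hz : ‖z‖ < 1) : -(1 / 2) < (z / (1 - z)).re := by
  have hnormSq : z.re ^ 2 + z.im ^ 2 < 1 := by
    nlinarith [Complex.sq_norm z, normSq_apply z, norm_nonneg z]
  have hpos : 0 < normSq (1 - z) :=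
    normSq_pos.mpr (slitPlane_ne_zero (one_sub_mem_slitPlane hz))
  rw [div_re, ← add_div, lt_div_iff₀ hpos, normSq_apply]
  simp only [sub_re, sub_im, one_re, one_im]
  nlinarith

noncomputable def koebePow (w z : ℂ) : ℂ := z * cexp (-w * Complex.log (1 - z))

section koebePow

variable {w z : ℂ}

lemma hasDerivAt_exp_neg_mul_log_one_sub (hz : ‖z‖ < 1) :
    HasDerivAt (fun z => cexp (-w * Complex.log (1 - z)))
      (cexp (-w * Complex.log (1 - z)) * (w / (1 - z))) z := by
  have hlog : HasDerivAt (fun z => Complex.log (1 - z)) ((1 - z)⁻¹ * -1) z :=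
    (hasDerivAt_log (one_sub_mem_slitPlane hz)).comp z ((hasDerivAt_id z).const_sub 1)
  exact (hlog.const_mul (-w)).cexp.congr_deriv (by ring)

lemma hasDerivAt_koebePow (hz : ‖z‖ < 1) :
    HasDerivAt (koebePow w) (cexp (-w * Complex.log (1 - z)) * (1 + w * z / (1 - z))) z := by
  have hsub : (1 : ℂ) - z ≠ 0 := slitPlane_ne_zero (one_sub_mem_slitPlane hz)
  exact ((hasDerivAt_id z).fun_mul (hasDerivAt_exp_neg_mul_log_one_sub hz)).congr_deriv
    (by simp only [id]; field_simp)

lemma analyticOnNhd_koebePow : AnalyticOnNhd ℂ (koebePow w) (ball 0 1) := fun _ hz =>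
  analyticAt_id.mul <| (analyticAt_const.mul <| (analyticAt_const.sub analyticAt_id).clog <|
    one_sub_mem_slitPlane (mem_ball_zero_iff.mp hz)).cexp

lemma koebePow_ne_zero (hz : z ≠ 0) : koebePow w z ≠ 0 :=
  mul_ne_zero hz (Complex.exp_ne_zero _)

lemma deriv_koebePow_zero : deriv (koebePow w) 0 = 1 := by
  simpa using (hasDerivAt_koebePow (w := w) (z := 0) (by simp)).deriv

lemma mul_deriv_koebePow_div (hz : ‖z‖ < 1) (hz₀ : z ≠ 0) :
    z * deriv (koebePow w) z / koebePow w z = 1 + w * z / (1 - z) := by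
  rw [(hasDerivAt_koebePow hz).deriv, koebePow]
  field_simp [Complex.exp_ne_zero]

lemma iteratedDeriv_two_koebePow_zero : iteratedDeriv 2 (koebePow w) 0 = 2 * w := by
  have hderiv : deriv (koebePow w) =ᶠ[nhds 0]
      fun z => cexp (-w * Complex.log (1 - z)) * (1 + w * z / (1 - z)) := by
    filter_upwards [isOpen_ball.mem_nhds (mem_ball_self one_pos)] with z hz
    exact (hasDerivAt_koebePow (mem_ball_zero_iff.mp hz)).deriv
  have hfrac : HasDerivAt (fun z : ℂ => 1 + w * z / (1 - z)) w 0 :=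
    (((hasDerivAt_id (0 : ℂ)).const_mul w).fun_div ((hasDerivAt_id 0).const_sub 1)
      (by norm_num)).const_add 1 |>.congr_deriv (by simp)
  rw [iteratedDeriv_succ, iteratedDeriv_one, hderiv.deriv_eq,
    ((hasDerivAt_exp_neg_mul_log_one_sub (by simp)).fun_mul hfrac).deriv]
  simp only [sub_zero, Complex.log_one, mul_zero, Complex.exp_zero, div_one, one_mul, add_zero,
    mul_one]
  ring

end koebePow

lemma mul_cos_lt_re_exp_neg_mul_I_mul {γ α : ℝ} (hcos : 0 < Real.cos γ) (hα : α < 1) {t : ℂ}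
    (ht : -(1 / 2) < t.re) :
    α * Real.cos γ <
      (cexp (-(γ * I)) * (1 + 2 * (1 - α : ℂ) * (cexp (γ * I) * Real.cos γ) * t)).re := by
  have hinv : cexp (-(γ * I)) * cexp (γ * I) = 1 := by
    rw [← Complex.exp_add, neg_add_cancel, Complex.exp_zero]
  have hrot : cexp (-(γ * I)) * (1 + 2 * (1 - α : ℂ) * (cexp (γ * I) * Real.cos γ) * t) =
      cexp (-(γ * I)) + ((2 * (1 - α) * Real.cos γ : ℝ) : ℂ) * t := by
    simp only [ofReal_mul, ofReal_sub, ofReal_one, ofReal_ofNat]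
    linear_combination (2 * (1 - (α : ℂ)) * Real.cos γ * t) * hinv
  have hre : (cexp (-(γ * I))).re = Real.cos γ := by
    rw [← neg_mul, ← ofReal_neg, exp_ofReal_mul_I_re, Real.cos_neg]
  rw [hrot, add_re, re_ofReal_mul, hre]
  nlinarith [mul_pos (sub_pos.mpr hα) hcos]

theorem stmt_14_general (γ α : ℝ) (hγ₁ : -(π / 2) < γ) (hγ₂ : γ < π / 2)
    (hα₂ : α < 1) (μ : ℂ) (hμ : μ = Complex.exp (↑γ * Complex.I) * Real.cos γ)
    (k : ℂ → ℂ)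
    (hk : ∀ z : ℂ, k z = z * Complex.exp (-(2 * (1 - α : ℂ) * μ) * Complex.log (1 - z))) :
    AnalyticOnNhd ℂ k (ball 0 1) ∧ k 0 = 0 ∧ deriv k 0 = 1 ∧
      (∀ z ∈ ball (0 : ℂ) 1, z ≠ 0 → k z ≠ 0) ∧
      (∀ z ∈ ball (0 : ℂ) 1, z ≠ 0 →
        α * Real.cos γ < (Complex.exp (-(↑γ * Complex.I)) * (z * deriv k z / k z)).re) ∧
      iteratedDeriv 2 k 0 / 2 = 2 * (1 - α : ℂ) * μ ∧
      ‖iteratedDeriv 2 k 0 / 2‖ = 2 * (1 - α) * Real.cos γ := by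
  have hcos : 0 < Real.cos γ := Real.cos_pos_of_mem_Ioo ⟨hγ₁, hγ₂⟩
  obtain rfl : k = koebePow (2 * (1 - α : ℂ) * μ) := funext hk
  refine ⟨analyticOnNhd_koebePow, by simp [koebePow], deriv_koebePow_zero,
    fun z _ hz₀ => koebePow_ne_zero hz₀, fun z hz hz₀ => ?_, ?_, ?_⟩
  · rw [mem_ball_zero_iff] at hz
    rw [mul_deriv_koebePow_div hz hz₀, mul_div_assoc, hμ]
    exact mul_cos_lt_re_exp_neg_mul_I_mul hcos hα₂ (neg_half_lt_re_div_one_sub hz)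
  · rw [iteratedDeriv_two_koebePow_zero]
    ring
  · rw [iteratedDeriv_two_koebePow_zero, mul_div_cancel_left₀ _ two_ne_zero, hμ,
      ← ofReal_one, ← ofReal_sub, norm_mul, norm_mul, norm_mul, norm_exp_ofReal_mul_I, norm_real,
      norm_real, Complex.norm_two, Real.norm_of_nonneg hcos.le,
      Real.norm_of_nonneg (sub_pos.mpr hα₂).le]
    ring

/-- For `-π/2 < γ < π/2`, `0 ≤ α < 1`, `μ = e^{iγ} cos γ`, the Koebe-type
function `k_{γ,α}(z) = z/(1 - z)^{2(1-α)μ} = z · exp(-2(1-α)μ Log(1 - z))` belongs to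
`S_γ(α)` and has `a₂ = 2(1-α)μ`, hence `|a₂| = 2(1-α) cos γ`. -/
theorem stmt_14 (γ α : ℝ) (hγ₁ : -(π / 2) < γ) (hγ₂ : γ < π / 2)
    (hα₁ : 0 ≤ α) (hα₂ : α < 1) (μ : ℂ) (hμ : μ = Complex.exp (↑γ * Complex.I) * Real.cos γ)
    (k : ℂ → ℂ)
    (hk : ∀ z : ℂ, k z = z * Complex.exp (-(2 * (1 - α : ℂ) * μ) * Complex.log (1 - z))) :
    AnalyticOnNhd ℂ k (ball 0 1) ∧ k 0 = 0 ∧ deriv k 0 = 1 ∧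
      (∀ z ∈ ball (0 : ℂ) 1, z ≠ 0 → k z ≠ 0) ∧
      (∀ z ∈ ball (0 : ℂ) 1, z ≠ 0 →
        α * Real.cos γ < (Complex.exp (-(↑γ * Complex.I)) * (z * deriv k z / k z)).re) ∧
      iteratedDeriv 2 k 0 / 2 = 2 * (1 - α : ℂ) * μ ∧
      ‖iteratedDeriv 2 k 0 / 2‖ = 2 * (1 - α) * Real.cos γ :=
  stmt_14_general γ α hγ₁ hγ₂ hα₂ μ hμ k hk
end
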